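/- arXiv:2001.01930 — 6 statements merged into one kernel-verified Lean document; each statement's English description precedes it below -/
import Mathlib

section
/- For every permutation σ of {1,…,n}, CR(σ) = wt(σ) − cross(σ); equivalently, wt(σ) = CR(σ) + cross(σ). -/
set_option maxRecDepth 4000


open scoped Classical
open Finset

noncomputable section

/-! Permutation statistics -/

/-- Number of weak excedances of a permutation. -/
def wexs {n : ℕ} (σ : Equiv.Perm (Fin n)) : ℕ :=
  (univ.filter fun i : Fin n => i ≤ σ i).card

/-- Number of crossings of a permutation. -/
def CRs {n : ℕ} (σ : Equiv.Perm (Fin n)) : ℕ :=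
  (univ.filter fun p : Fin n × Fin n =>
    (p.1 < p.2 ∧ p.2 ≤ σ p.1 ∧ σ p.1 < σ p.2) ∨
    (σ p.1 < σ p.2 ∧ σ p.2 < p.1 ∧ p.1 < p.2)).card

/-- The weight of a permutation. -/
def wts {n : ℕ} (σ : Equiv.Perm (Fin n)) : ℕ :=
  ∑ i : Fin n, if (i : ℕ) ≤ (σ i : ℕ) then (σ i : ℕ) - (i : ℕ) else (i : ℕ) - (σ i : ℕ) - 1

/-- The number of inversions (pairs of crossing edges) of a permutation. -/
def crossInv {n : ℕ} (σ : Equiv.Perm (Fin n)) : ℕ :=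
  (univ.filter fun p : Fin n × Fin n => p.1 < p.2 ∧ σ p.2 < σ p.1).card

/-! q-Laguerre polynomials over R = ℤ[q,y] -/

abbrev Rqy : Type := MvPolynomial (Fin 2) ℤ

def qv : Rqy := MvPolynomial.X 0
def yv : Rqy := MvPolynomial.X 1

/-- The q-integer [n]_q = 1 + q + ⋯ + q^(n-1). -/
def qint (n : ℕ) : Rqy := ∑ i ∈ range n, qv ^ i

/-- The q-Laguerre polynomials. -/
def Lag : ℕ → Polynomial Rqy
  | 0 => 1
  | 1 => Polynomial.X - Polynomial.C yv
  | (n + 2) =>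
      (Polynomial.X - Polynomial.C (yv * qint (n + 2) + qint (n + 1))) * Lag (n + 1)
        - Polynomial.C (yv * (qint (n + 1)) ^ 2) * Lag n

/-- The n-th moment. -/
def mu (n : ℕ) : Rqy := ∑ σ : Equiv.Perm (Fin n), yv ^ wexs σ * qv ^ CRs σ

/-- The linear functional 𝓛 with 𝓛(xⁿ) = μₙ. -/
def LL (p : Polynomial Rqy) : Rqy := p.sum fun n c => c * mu n

/-! Blocks / homogeneity -/

/-- Offset of the r-th block (0-based). -/
def off {k : ℕ} (n : Fin k → ℕ) (r : Fin k) : ℕ := ∑ s : Fin k, if s < r then n s else 0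

/-- The edge (i, σ i) is homogeneous with respect to the composition n. -/
def HomEdge {k N : ℕ} (n : Fin k → ℕ) (σ : Equiv.Perm (Fin N)) (i : Fin N) : Prop :=
  ∃ r : Fin k, off n r ≤ (i : ℕ) ∧ (i : ℕ) < off n r + n r ∧
    off n r ≤ (σ i : ℕ) ∧ (σ i : ℕ) < off n r + n r

/-! Matchings -/

/-- A matching of degree n: a partial injective assignment of lower vertices to
upper vertices. -/
def Matching (n : ℕ) : Type :=
  {f : Fin n → Option (Fin n) // ∀ i j a, f i = some a → f j = some a → i = j}

instance (n : ℕ) : Fintype (Matching n) := Subtype.fintype _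

/-- Number of edges of a matching. -/
def eM {n : ℕ} (π : Matching n) : ℕ := (univ.filter fun i => (π.1 i).isSome).card

/-- Lower vertex j is unmatched. -/
def unmatchedLower {n : ℕ} (π : Matching n) (j : Fin n) : Prop := ∀ i, π.1 i ≠ some j

/-- Upper block index. -/
def bindUM {n : ℕ} (π : Matching n) (i : Fin n) : ℕ :=
  1 + (univ.filter fun i' => i' < i ∧ π.1 i' = none).card

/-- Lower block index. -/
def bindLM {n : ℕ} (π : Matching n) (j : Fin n) : ℕ :=
  1 + (univ.filter fun j' => j' < j ∧ unmatchedLower π j').card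

/-- Block difference of the edge at upper vertex i (only meaningful when i is matched). -/
def bdiffM {n : ℕ} (π : Matching n) (i : Fin n) : ℤ :=
  (bindLM π ((π.1 i).getD i) : ℤ) - (bindUM π i : ℤ)

/-- Number of block weak excedances. -/
def bwexM {n : ℕ} (π : Matching n) : ℕ :=
  (univ.filter fun i => (π.1 i).isSome ∧ 0 ≤ bdiffM π i).card

/-- The block weight. -/
def bwtM {n : ℕ} (π : Matching n) : ℕ :=
  (∑ i ∈ univ.filter (fun i => (π.1 i).isSome),
    if 0 ≤ bdiffM π i then bdiffM π i else -bdiffM π i - 1).toNat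

/-- Number of crossings of a matching. -/
def crossM {n : ℕ} (π : Matching n) : ℕ :=
  (univ.filter fun p : Fin n × Fin n => p.1 < p.2 ∧
    ∃ a b, π.1 p.1 = some a ∧ π.1 p.2 = some b ∧ b < a).card

/-- Edge (i,a) is homogeneous with respect to n. -/
def HomIdx {k N : ℕ} (n : Fin k → ℕ) (i a : Fin N) : Prop :=
  ∃ r : Fin k, off n r ≤ (i : ℕ) ∧ (i : ℕ) < off n r + n r ∧
    off n r ≤ (a : ℕ) ∧ (a : ℕ) < off n r + n r

/-! Marked perfect matchings -/

/-- S is a valid set of marked edges: it contains every inhomogeneous edge. -/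
def ValidMark {k N : ℕ} (n : Fin k → ℕ) (σ : Equiv.Perm (Fin N)) (S : Finset (Fin N)) : Prop :=
  ∀ i, ¬ HomEdge n σ i → i ∈ S

/-- Upper block index of a marked perfect matching. -/
def bindU {N : ℕ} (S : Finset (Fin N)) (i : Fin N) : ℕ :=
  1 + (S.filter fun j => j < i).card

/-- Lower block index of a marked perfect matching. -/
def bindL {N : ℕ} (σ : Equiv.Perm (Fin N)) (S : Finset (Fin N)) (l : Fin N) : ℕ :=
  1 + (S.filter fun j => σ j < l).card

/-- Block difference of the edge e_i. -/
def bdiff {N : ℕ} (σ : Equiv.Perm (Fin N)) (S : Finset (Fin N)) (i : Fin N) : ℤ :=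
  (bindL σ S (σ i) : ℤ) - (bindU S i : ℤ)

/-- Number of unmarked edges. -/
def eem {N : ℕ} (S : Finset (Fin N)) : ℕ := N - S.card

/-- Number of block weak excedances of a marked perfect matching. -/
def bwexm {N : ℕ} (σ : Equiv.Perm (Fin N)) (S : Finset (Fin N)) : ℕ :=
  (univ.filter fun i => 0 ≤ bdiff σ S i).card

/-- The weight of a marked perfect matching. -/
def wtm {N : ℕ} (σ : Equiv.Perm (Fin N)) (S : Finset (Fin N)) : ℕ :=
  (∑ i : Fin N, if 0 ≤ bdiff σ S i then bdiff σ S i else -bdiff σ S i - 1).toNat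

/-- The (signed) crossing number of a marked perfect matching. -/
def crossm {N : ℕ} (σ : Equiv.Perm (Fin N)) (S : Finset (Fin N)) : ℤ :=
  ((univ.filter fun p : Fin N × Fin N =>
      p.1 < p.2 ∧ σ p.2 < σ p.1 ∧ p.1 ∉ S ∧ p.2 ∉ S).card : ℤ)
  - ((univ.filter fun p : Fin N × Fin N =>
      p.1 < p.2 ∧ σ p.2 < σ p.1 ∧ p.1 ∈ S ∧ p.2 ∈ S).card : ℤ)

/-- The edge e_j crosses the edge e_i from the left. -/
def CrossLeft {N : ℕ} (σ : Equiv.Perm (Fin N)) (j i : Fin N) : Prop :=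
  j < i ∧ σ i < σ j

/-- The homogeneous edge e_i is convertible in (σ, S). -/
def Convertible {N : ℕ} (σ : Equiv.Perm (Fin N)) (S : Finset (Fin N)) (i : Fin N) : Prop :=
  if i ∈ S then
    (∀ j, CrossLeft σ j i → 0 < bdiff σ S j) ∧ (∀ j, CrossLeft σ i j → bdiff σ S j < -1)
  else
    (∀ j, CrossLeft σ j i → 0 ≤ bdiff σ S j) ∧ (∀ j, CrossLeft σ i j → bdiff σ S j ≤ -1)

/-- Toggle the mark on edge i. -/
def toggle {N : ℕ} (S : Finset (Fin N)) (i : Fin N) : Finset (Fin N) :=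
  if i ∈ S then S.erase i else insert i S

end

section AuxCR

open Finset

variable {n : ℕ}

private lemma auxCR_dsum_congr {f g : Fin n → Fin n → ℕ} (h : ∀ i j, f i j = g i j) :
    ∑ i : Fin n, ∑ j : Fin n, f i j = ∑ i : Fin n, ∑ j : Fin n, g i j :=
  Finset.sum_congr rfl fun i _ => Finset.sum_congr rfl fun j _ => h i j

/-- Coverage balance: for any threshold `t`, the number of `i` with
`i < t ≤ σ i` equals the number of `i` with `σ i < t ≤ i`. -/
private lemma auxCR_key (σ : Equiv.Perm (Fin n)) (t : ℕ) :
    (∑ i : Fin n, if (i : ℕ) < t ∧ t ≤ (σ i : ℕ) then 1 else 0)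
      = ∑ i : Fin n, if (σ i : ℕ) < t ∧ t ≤ (i : ℕ) then 1 else 0 := by
  have h1 : (∑ i : Fin n, if (σ i : ℕ) < t then (1 : ℕ) else 0)
      = ∑ i : Fin n, if (i : ℕ) < t then (1 : ℕ) else 0 :=
    Equiv.sum_comp σ (fun i => if (i : ℕ) < t then (1 : ℕ) else 0)
  have h2 : (∑ i : Fin n, if (i : ℕ) < t then (1 : ℕ) else 0)
      = (∑ i : Fin n, if (i : ℕ) < t ∧ (σ i : ℕ) < t then (1 : ℕ) else 0)
        + ∑ i : Fin n, if (i : ℕ) < t ∧ t ≤ (σ i : ℕ) then (1 : ℕ) else 0 := by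
    rw [← Finset.sum_add_distrib]
    exact Finset.sum_congr rfl fun i _ => by split_ifs <;> omega
  have h3 : (∑ i : Fin n, if (σ i : ℕ) < t then (1 : ℕ) else 0)
      = (∑ i : Fin n, if (i : ℕ) < t ∧ (σ i : ℕ) < t then (1 : ℕ) else 0)
        + ∑ i : Fin n, if (σ i : ℕ) < t ∧ t ≤ (i : ℕ) then (1 : ℕ) else 0 := by
    rw [← Finset.sum_add_distrib]
    exact Finset.sum_congr rfl fun i _ => by split_ifs <;> omega
  omega

private lemma auxCR_val_iff (σ : Equiv.Perm (Fin n)) (i j : Fin n) :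
    (i : ℕ) = (j : ℕ) ↔ (σ i : ℕ) = (σ j : ℕ) := by
  constructor
  · intro h; rw [Fin.val_eq_val] at h; rw [h]
  · intro h; rw [Fin.val_eq_val] at h ⊢; exact σ.injective h

/-- The crossing-count balance `#X = #Y`. -/
private lemma auxCR_XY (σ : Equiv.Perm (Fin n)) :
    (∑ i : Fin n, ∑ j : Fin n,
        if (σ j : ℕ) < (i : ℕ) ∧ (i : ℕ) < (j : ℕ) ∧ (j : ℕ) ≤ (σ i : ℕ) then 1 else 0)
      = ∑ i : Fin n, ∑ j : Fin n,
        if (i : ℕ) ≤ (σ j : ℕ) ∧ (σ j : ℕ) < (σ i : ℕ) ∧ (σ i : ℕ) < (j : ℕ) then 1 else 0 := by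
  -- abbreviations (as plain sums)
  -- E = X + N
  have hE : (∑ i : Fin n, ∑ j : Fin n,
        if (σ j : ℕ) < (j : ℕ) ∧ (i : ℕ) < (j : ℕ) ∧ (j : ℕ) ≤ (σ i : ℕ) then (1:ℕ) else 0)
      = (∑ i : Fin n, ∑ j : Fin n,
          if (σ j : ℕ) < (i : ℕ) ∧ (i : ℕ) < (j : ℕ) ∧ (j : ℕ) ≤ (σ i : ℕ) then 1 else 0)
        + ∑ i : Fin n, ∑ j : Fin n,
          if (i : ℕ) ≤ (σ j : ℕ) ∧ (σ j : ℕ) < (j : ℕ) ∧ (j : ℕ) ≤ (σ i : ℕ) then 1 else 0 := by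
    rw [← Finset.sum_add_distrib]
    simp only [← Finset.sum_add_distrib]
    refine auxCR_dsum_congr fun i j => ?_
    split_ifs <;> omega
  -- S = Y + N
  have hS : (∑ i : Fin n, ∑ j : Fin n,
        if (σ j : ℕ) < (j : ℕ) ∧ (i : ℕ) ≤ (σ j : ℕ) ∧ (σ j : ℕ) < (σ i : ℕ) then (1:ℕ) else 0)
      = (∑ i : Fin n, ∑ j : Fin n,
          if (i : ℕ) ≤ (σ j : ℕ) ∧ (σ j : ℕ) < (σ i : ℕ) ∧ (σ i : ℕ) < (j : ℕ) then 1 else 0)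
        + ∑ i : Fin n, ∑ j : Fin n,
          if (i : ℕ) ≤ (σ j : ℕ) ∧ (σ j : ℕ) < (j : ℕ) ∧ (j : ℕ) ≤ (σ i : ℕ) then 1 else 0 := by
    rw [← Finset.sum_add_distrib]
    simp only [← Finset.sum_add_distrib]
    refine auxCR_dsum_congr fun i j => ?_
    split_ifs <;> omega
  -- E = E' (apply the coverage balance at threshold j)
  have hE' : (∑ i : Fin n, ∑ j : Fin n,
        if (σ j : ℕ) < (j : ℕ) ∧ (i : ℕ) < (j : ℕ) ∧ (j : ℕ) ≤ (σ i : ℕ) then (1:ℕ) else 0)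
      = ∑ i : Fin n, ∑ j : Fin n,
        if (σ j : ℕ) < (j : ℕ) ∧ (σ i : ℕ) < (j : ℕ) ∧ (j : ℕ) ≤ (i : ℕ) then (1:ℕ) else 0 := by
    rw [Finset.sum_comm]
    rw [Finset.sum_comm (f := fun i j =>
      if (σ j : ℕ) < (j : ℕ) ∧ (σ i : ℕ) < (j : ℕ) ∧ (j : ℕ) ≤ (i : ℕ) then (1:ℕ) else 0)]
    refine Finset.sum_congr rfl fun j _ => ?_
    by_cases h : (σ j : ℕ) < (j : ℕ)
    · have hk := auxCR_key σ (j : ℕ)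
      calc (∑ i : Fin n,
            if (σ j : ℕ) < (j : ℕ) ∧ (i : ℕ) < (j : ℕ) ∧ (j : ℕ) ≤ (σ i : ℕ) then (1:ℕ) else 0)
          = ∑ i : Fin n, if (i : ℕ) < (j : ℕ) ∧ (j : ℕ) ≤ (σ i : ℕ) then (1:ℕ) else 0 :=
            Finset.sum_congr rfl fun i _ => by split_ifs <;> omega
        _ = ∑ i : Fin n, if (σ i : ℕ) < (j : ℕ) ∧ (j : ℕ) ≤ (i : ℕ) then (1:ℕ) else 0 := hk
        _ = ∑ i : Fin n,
            if (σ j : ℕ) < (j : ℕ) ∧ (σ i : ℕ) < (j : ℕ) ∧ (j : ℕ) ≤ (i : ℕ) then (1:ℕ) else 0 :=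
            Finset.sum_congr rfl fun i _ => by split_ifs <;> omega
    · exact Finset.sum_congr rfl fun i _ => by split_ifs <;> omega
  -- S = S' (apply the coverage balance at threshold σ j + 1)
  have hS' : (∑ i : Fin n, ∑ j : Fin n,
        if (σ j : ℕ) < (j : ℕ) ∧ (i : ℕ) ≤ (σ j : ℕ) ∧ (σ j : ℕ) < (σ i : ℕ) then (1:ℕ) else 0)
      = ∑ i : Fin n, ∑ j : Fin n,
        if (σ j : ℕ) < (j : ℕ) ∧ (σ i : ℕ) ≤ (σ j : ℕ) ∧ (σ j : ℕ) < (i : ℕ) then (1:ℕ) else 0 := by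
    rw [Finset.sum_comm]
    rw [Finset.sum_comm (f := fun i j =>
      if (σ j : ℕ) < (j : ℕ) ∧ (σ i : ℕ) ≤ (σ j : ℕ) ∧ (σ j : ℕ) < (i : ℕ) then (1:ℕ) else 0)]
    refine Finset.sum_congr rfl fun j _ => ?_
    by_cases h : (σ j : ℕ) < (j : ℕ)
    · have hk := auxCR_key σ ((σ j : ℕ) + 1)
      calc (∑ i : Fin n,
            if (σ j : ℕ) < (j : ℕ) ∧ (i : ℕ) ≤ (σ j : ℕ) ∧ (σ j : ℕ) < (σ i : ℕ) then (1:ℕ) else 0)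
          = ∑ i : Fin n,
            if (i : ℕ) < (σ j : ℕ) + 1 ∧ (σ j : ℕ) + 1 ≤ (σ i : ℕ) then (1:ℕ) else 0 :=
            Finset.sum_congr rfl fun i _ => by split_ifs <;> omega
        _ = ∑ i : Fin n,
            if (σ i : ℕ) < (σ j : ℕ) + 1 ∧ (σ j : ℕ) + 1 ≤ (i : ℕ) then (1:ℕ) else 0 := hk
        _ = ∑ i : Fin n,
            if (σ j : ℕ) < (j : ℕ) ∧ (σ i : ℕ) ≤ (σ j : ℕ) ∧ (σ j : ℕ) < (i : ℕ) then (1:ℕ) else 0 :=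
            Finset.sum_congr rfl fun i _ => by split_ifs <;> omega
    · exact Finset.sum_congr rfl fun i _ => by split_ifs <;> omega
  -- E' = S' by the ordered-pair swap argument
  have hES : (∑ i : Fin n, ∑ j : Fin n,
        if (σ j : ℕ) < (j : ℕ) ∧ (σ i : ℕ) < (j : ℕ) ∧ (j : ℕ) ≤ (i : ℕ) then (1:ℕ) else 0)
      = ∑ i : Fin n, ∑ j : Fin n,
        if (σ j : ℕ) < (j : ℕ) ∧ (σ i : ℕ) ≤ (σ j : ℕ) ∧ (σ j : ℕ) < (i : ℕ) then (1:ℕ) else 0 := by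
    have hswapE : (∑ i : Fin n, ∑ j : Fin n,
          if (σ j : ℕ) < (j : ℕ) ∧ (σ i : ℕ) < (j : ℕ) ∧ (j : ℕ) ≤ (i : ℕ) then (1:ℕ) else 0)
        = ∑ i : Fin n, ∑ j : Fin n,
          if (σ i : ℕ) < (i : ℕ) ∧ (σ j : ℕ) < (i : ℕ) ∧ (i : ℕ) ≤ (j : ℕ) then (1:ℕ) else 0 :=
      Finset.sum_comm
    have hswapS : (∑ i : Fin n, ∑ j : Fin n,
          if (σ j : ℕ) < (j : ℕ) ∧ (σ i : ℕ) ≤ (σ j : ℕ) ∧ (σ j : ℕ) < (i : ℕ) then (1:ℕ) else 0)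
        = ∑ i : Fin n, ∑ j : Fin n,
          if (σ i : ℕ) < (i : ℕ) ∧ (σ j : ℕ) ≤ (σ i : ℕ) ∧ (σ i : ℕ) < (j : ℕ) then (1:ℕ) else 0 :=
      Finset.sum_comm
    have hpt : (∑ i : Fin n, ∑ j : Fin n,
          ((if (σ j : ℕ) < (j : ℕ) ∧ (σ i : ℕ) < (j : ℕ) ∧ (j : ℕ) ≤ (i : ℕ) then (1:ℕ) else 0)
            + (if (σ i : ℕ) < (i : ℕ) ∧ (σ j : ℕ) < (i : ℕ) ∧ (i : ℕ) ≤ (j : ℕ) then (1:ℕ) else 0)))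
        = ∑ i : Fin n, ∑ j : Fin n,
          ((if (σ j : ℕ) < (j : ℕ) ∧ (σ i : ℕ) ≤ (σ j : ℕ) ∧ (σ j : ℕ) < (i : ℕ) then (1:ℕ) else 0)
            + (if (σ i : ℕ) < (i : ℕ) ∧ (σ j : ℕ) ≤ (σ i : ℕ) ∧ (σ i : ℕ) < (j : ℕ) then (1:ℕ) else 0)) := by
      refine auxCR_dsum_congr fun i j => ?_
      have hiff := auxCR_val_iff σ i j
      split_ifs <;> omega
    simp only [Finset.sum_add_distrib] at hpt
    omega
  omega

end AuxCR

/-- for every permutation σ of {1,…,n},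
CR(σ) = wt(σ) − cross(σ), equivalently wt(σ) = CR(σ) + cross(σ). -/
theorem CR_eq_wt_sub_cross {n : ℕ} (σ : Equiv.Perm (Fin n)) :
    CRs σ = wts σ - crossInv σ ∧ wts σ = CRs σ + crossInv σ := by
  have hmain : wts σ = CRs σ + crossInv σ := by
    -- CRs as a double sum of indicators on values
    have hCR : CRs σ = ∑ i : Fin n, ∑ j : Fin n,
        if ((i : ℕ) < (j : ℕ) ∧ (j : ℕ) ≤ (σ i : ℕ) ∧ (σ i : ℕ) < (σ j : ℕ))
            ∨ ((σ i : ℕ) < (σ j : ℕ) ∧ (σ j : ℕ) < (i : ℕ) ∧ (i : ℕ) < (j : ℕ)) then 1 else 0 := by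
      rw [CRs, Finset.card_filter, Fintype.sum_prod_type]
      refine auxCR_dsum_congr fun i j => ?_
      simp only [Fin.lt_def, Fin.le_def]
    -- crossInv as a double sum
    have hinv : crossInv σ = ∑ i : Fin n, ∑ j : Fin n,
        if (i : ℕ) < (j : ℕ) ∧ (σ j : ℕ) < (σ i : ℕ) then 1 else 0 := by
      rw [crossInv, Finset.card_filter, Fintype.sum_prod_type]
      refine auxCR_dsum_congr fun i j => ?_
      simp only [Fin.lt_def]
    -- wts as a double sum
    have hwts : wts σ = ∑ i : Fin n, ∑ j : Fin n,
        ((if (i : ℕ) < (j : ℕ) ∧ (j : ℕ) ≤ (σ i : ℕ) then (1:ℕ) else 0)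
          + (if (σ i : ℕ) < (j : ℕ) ∧ (j : ℕ) < (i : ℕ) then (1:ℕ) else 0)) := by
      rw [wts]
      refine Finset.sum_congr rfl fun i _ => ?_
      have hIoc : (∑ j : Fin n, if (i : ℕ) < (j : ℕ) ∧ (j : ℕ) ≤ (σ i : ℕ) then (1:ℕ) else 0)
          = (σ i : ℕ) - (i : ℕ) := by
        rw [← Finset.card_filter]
        have hset : (Finset.univ.filter fun j : Fin n => (i : ℕ) < (j : ℕ) ∧ (j : ℕ) ≤ (σ i : ℕ))
            = Finset.Ioc i (σ i) := by
          ext j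
          rw [Finset.mem_filter, Finset.mem_Ioc]
          simp only [Finset.mem_univ, true_and, Fin.lt_def, Fin.le_def]
        rw [hset, Fin.card_Ioc]
      have hIoo : (∑ j : Fin n, if (σ i : ℕ) < (j : ℕ) ∧ (j : ℕ) < (i : ℕ) then (1:ℕ) else 0)
          = (i : ℕ) - (σ i : ℕ) - 1 := by
        rw [← Finset.card_filter]
        have hset : (Finset.univ.filter fun j : Fin n => (σ i : ℕ) < (j : ℕ) ∧ (j : ℕ) < (i : ℕ))
            = Finset.Ioo (σ i) i := by
          ext j
          rw [Finset.mem_filter, Finset.mem_Ioo]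
          simp only [Finset.mem_univ, true_and, Fin.lt_def]
        rw [hset, Fin.card_Ioo]
      rw [Finset.sum_add_distrib, hIoc, hIoo]
      split_ifs <;> omega
    -- swap the deficiency part
    have hswap : (∑ i : Fin n, ∑ j : Fin n,
          if (σ i : ℕ) < (j : ℕ) ∧ (j : ℕ) < (i : ℕ) then (1:ℕ) else 0)
        = ∑ i : Fin n, ∑ j : Fin n,
          if (σ j : ℕ) < (i : ℕ) ∧ (i : ℕ) < (j : ℕ) then (1:ℕ) else 0 :=
      Finset.sum_comm
    have hXY := auxCR_XY σ
    -- pointwise bookkeeping identity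
    have hpt : (∑ i : Fin n, ∑ j : Fin n,
          ((if (i : ℕ) < (j : ℕ) ∧ (j : ℕ) ≤ (σ i : ℕ) then (1:ℕ) else 0)
            + (if (σ j : ℕ) < (i : ℕ) ∧ (i : ℕ) < (j : ℕ) then (1:ℕ) else 0)
            + (if (i : ℕ) ≤ (σ j : ℕ) ∧ (σ j : ℕ) < (σ i : ℕ) ∧ (σ i : ℕ) < (j : ℕ) then (1:ℕ) else 0)))
        = ∑ i : Fin n, ∑ j : Fin n,
          ((if ((i : ℕ) < (j : ℕ) ∧ (j : ℕ) ≤ (σ i : ℕ) ∧ (σ i : ℕ) < (σ j : ℕ))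
              ∨ ((σ i : ℕ) < (σ j : ℕ) ∧ (σ j : ℕ) < (i : ℕ) ∧ (i : ℕ) < (j : ℕ)) then (1:ℕ) else 0)
            + (if (i : ℕ) < (j : ℕ) ∧ (σ j : ℕ) < (σ i : ℕ) then (1:ℕ) else 0)
            + (if (σ j : ℕ) < (i : ℕ) ∧ (i : ℕ) < (j : ℕ) ∧ (j : ℕ) ≤ (σ i : ℕ) then (1:ℕ) else 0)) := by
      refine auxCR_dsum_congr fun i j => ?_
      have hiff := auxCR_val_iff σ i j
      split_ifs <;> omega
    simp only [Finset.sum_add_distrib] at hpt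
    rw [hCR, hinv, hwts]
    simp only [Finset.sum_add_distrib]
    omega
  exact ⟨by omega, hmain⟩
end

section
/- Let m = (σ,S) ∈ PM*(n₁,…,n_k) have at least one homogeneous edge with negative block difference, and let i = min{j : e_j is homogeneous and bdiff_m(e_j) < 0}. If e_i is not convertible in m, then e_i is marked, i.e., i ∈ S. -/
open scoped Classical
open Finset

section Aux

open scoped Classical

/-- If `r < r'` then block `r` ends before block `r'` starts. -/
lemma off_lt_aux {k : ℕ} (n : Fin k → ℕ) {r r' : Fin k} (h : r < r') :
    off n r + n r ≤ off n r' := by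
  unfold off
  have h1 : (∑ s : Fin k, if s < r then n s else 0) + n r
      = ∑ s : Fin k, ((if s < r then n s else 0) + (if s = r then n s else 0)) := by
    rw [Finset.sum_add_distrib, Finset.sum_ite_eq' Finset.univ r n]
    simp
  rw [h1]
  apply Finset.sum_le_sum
  intro s _
  by_cases h2 : s < r
  · have h3 : s ≠ r := ne_of_lt h2
    have h4 : s < r' := h2.trans h
    simp [h2, h3, h4]
  · by_cases h5 : s = r
    · subst h5
      simp [h2, h]
    · simp [h2, h5]

lemma off_boundary_c {k : ℕ} (n : Fin k → ℕ) (r r' : Fin k) :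
    off n r' + n r' ≤ off n r ∨ off n r ≤ off n r' := by
  rcases lt_trichotomy r' r with h | h | h
  · exact Or.inl (off_lt_aux n h)
  · subst h; right; exact le_refl _
  · right
    have := off_lt_aux n h
    omega

lemma off_boundary_d {k : ℕ} (n : Fin k → ℕ) (r r' : Fin k) :
    off n r' + n r' ≤ off n r + n r ∨ off n r + n r ≤ off n r' := by
  rcases lt_trichotomy r' r with h | h | h
  · left
    have := off_lt_aux n h
    omega
  · subst h; left; exact le_refl _
  · exact Or.inr (off_lt_aux n h)

/-- A homogeneous edge does not straddle a block boundary `t`. -/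
lemma hom_iff_aux {k N : ℕ} (n : Fin k → ℕ) (σ : Equiv.Perm (Fin N)) (t : ℕ)
    (hb : ∀ r', off n r' + n r' ≤ t ∨ t ≤ off n r') {s : Fin N}
    (hs : HomEdge n σ s) : ((s : ℕ) < t ↔ ((σ s : ℕ) < t)) := by
  obtain ⟨r', h1, h2, h3, h4⟩ := hs
  rcases hb r' with h | h <;> omega

/-- Counting marked edges below a threshold `t` that no unmarked edge straddles. -/
lemma count_eq_aux {N : ℕ} (σ : Equiv.Perm (Fin N)) (S : Finset (Fin N)) (t : ℕ)
    (h : ∀ s, s ∉ S → ((s : ℕ) < t ↔ ((σ s : ℕ) < t))) :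
    (S.filter fun s : Fin N => ((σ s : ℕ) < t)).card = (S.filter fun s : Fin N => ((s : ℕ) < t)).card := by
  have htot : (Finset.univ.filter fun s : Fin N => ((σ s : ℕ) < t)).card
      = (Finset.univ.filter fun s : Fin N => ((s : ℕ) < t)).card := by
    apply Finset.card_bij (fun s _ => σ s)
    · intro a ha
      simp only [Finset.mem_filter, Finset.mem_univ, true_and] at ha ⊢
      exact ha
    · intro a _ b _ hab
      exact σ.injective hab
    · intro b hb
      refine ⟨σ.symm b, ?_, by simp⟩
      simp only [Finset.mem_filter, Finset.mem_univ, true_and] at hb ⊢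
      simpa using hb
  have hsplit : ∀ (P : Fin N → Prop) [DecidablePred P],
      ((Finset.univ.filter fun s : Fin N => P s).filter fun s => s ∈ S).card
        + ((Finset.univ.filter fun s : Fin N => P s).filter fun s => s ∉ S).card
      = (Finset.univ.filter fun s : Fin N => P s).card := by
    intro P _
    exact Finset.card_filter_add_card_filter_not (fun s => s ∈ S)
  have e1 : ((Finset.univ.filter fun s : Fin N => ((σ s : ℕ) < t)).filter fun s => s ∈ S)
      = S.filter fun s : Fin N => ((σ s : ℕ) < t) := by
    ext a; simp [and_comm]
  have e2 : ((Finset.univ.filter fun s : Fin N => ((s : ℕ) < t)).filter fun s => s ∈ S)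
      = S.filter fun s : Fin N => ((s : ℕ) < t) := by
    ext a; simp [and_comm]
  have e3 : ((Finset.univ.filter fun s : Fin N => ((σ s : ℕ) < t)).filter fun s => s ∉ S)
      = ((Finset.univ.filter fun s : Fin N => ((s : ℕ) < t)).filter fun s => s ∉ S) := by
    ext a
    simp only [Finset.mem_filter, Finset.mem_univ, true_and]
    constructor
    · rintro ⟨h1, h2⟩; exact ⟨(h a h2).mpr h1, h2⟩
    · rintro ⟨h1, h2⟩; exact ⟨(h a h2).mp h1, h2⟩
  have k1 := hsplit (fun s => ((σ s : ℕ) < t))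
  have k2 := hsplit (fun s => ((s : ℕ) < t))
  rw [e1, e3] at k1
  rw [e2] at k2
  omega

end Aux

/-- Lemma 4.2: the minimal-index homogeneous edge of negative
block difference, if not convertible, is marked. -/
theorem min_negative_not_convertible_marked {k N : ℕ} (n : Fin k → ℕ)
    (hn : ∀ r, 0 < n r) (hN : N = ∑ r, n r)
    (σ : Equiv.Perm (Fin N)) (S : Finset (Fin N)) (hS : ValidMark n σ S)
    (i : Fin N) (hih : HomEdge n σ i) (hineg : bdiff σ S i < 0)
    (hmin : ∀ j, HomEdge n σ j → bdiff σ S j < 0 → i ≤ j)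
    (hnc : ¬ Convertible σ S i) :
    i ∈ S := by
  by_contra hiS
  apply hnc
  unfold Convertible
  rw [if_neg hiS]
  obtain ⟨r, hc1, hc2, hc3, hc4⟩ := hih
  constructor
  · -- edges crossing e_i from the left have nonnegative bdiff
    rintro j ⟨hji, hσ⟩
    by_contra hneg
    push_neg at hneg
    have hjneg : bdiff σ S j < 0 := hneg
    have hjhom : ¬ HomEdge n σ j := by
      intro hh
      exact absurd (hmin j hh hjneg) (not_le.mpr hji)
    have hjiN : (j : ℕ) < (i : ℕ) := hji
    have hσN : (σ i : ℕ) < (σ j : ℕ) := hσ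
    -- choose the block boundary t
    by_cases hjc : (j : ℕ) < off n r
    · -- t = off n r
      have hb := off_boundary_c n r
      have hkey := count_eq_aux σ S (off n r) (fun s hs => by
        have hhom : HomEdge n σ s := by
          by_contra hcon
          exact hs (hS s hcon)
        exact hom_iff_aux n σ (off n r) (hb) hhom)
      have hsub1 : (S.filter fun s : Fin N => ((σ s : ℕ) < off n r))
          ⊆ (S.filter fun s => σ s < σ j) := by
        intro s hsm
        simp only [Finset.mem_filter] at hsm ⊢
        refine ⟨hsm.1, ?_⟩
        have : (σ s : ℕ) < (σ j : ℕ) := by omega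
        exact this
      have hsub2 : (S.filter fun s => s < j)
          ⊆ (S.filter fun s : Fin N => ((s : ℕ) < off n r)) := by
        intro s hsm
        simp only [Finset.mem_filter] at hsm ⊢
        refine ⟨hsm.1, ?_⟩
        have : (s : ℕ) < (j : ℕ) := hsm.2
        omega
      have c1 := Finset.card_le_card hsub1
      have c2 := Finset.card_le_card hsub2
      simp only [bdiff, bindL, bindU] at hjneg
      push_cast at hjneg
      omega
    · -- t = off n r + n r
      push_neg at hjc
      have hσjc : off n r ≤ (σ j : ℕ) := by omega
      have hσjd : off n r + n r ≤ (σ j : ℕ) := by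
        by_contra hcon
        push_neg at hcon
        exact hjhom ⟨r, hjc, by omega, hσjc, hcon⟩
      have hb := off_boundary_d n r
      have hkey := count_eq_aux σ S (off n r + n r) (fun s hs => by
        have hhom : HomEdge n σ s := by
          by_contra hcon
          exact hs (hS s hcon)
        exact hom_iff_aux n σ (off n r + n r) (hb) hhom)
      have hsub1 : (S.filter fun s : Fin N => ((σ s : ℕ) < off n r + n r))
          ⊆ (S.filter fun s => σ s < σ j) := by
        intro s hsm
        simp only [Finset.mem_filter] at hsm ⊢
        refine ⟨hsm.1, ?_⟩
        have : (σ s : ℕ) < (σ j : ℕ) := by omega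
        exact this
      have hsub2 : (S.filter fun s => s < j)
          ⊆ (S.filter fun s : Fin N => ((s : ℕ) < off n r + n r)) := by
        intro s hsm
        simp only [Finset.mem_filter] at hsm ⊢
        refine ⟨hsm.1, ?_⟩
        have : (s : ℕ) < (j : ℕ) := hsm.2
        omega
      have c1 := Finset.card_le_card hsub1
      have c2 := Finset.card_le_card hsub2
      simp only [bdiff, bindL, bindU] at hjneg
      push_cast at hjneg
      omega
  · -- edges crossed by e_i from the left have bdiff ≤ -1
    rintro j ⟨hij, hσ⟩
    have hsub1 : (S.filter fun s => σ s < σ j) ⊆ (S.filter fun s => σ s < σ i) := by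
      intro s hsm
      simp only [Finset.mem_filter] at hsm ⊢
      exact ⟨hsm.1, hsm.2.trans hσ⟩
    have hsub2 : (S.filter fun s => s < i) ⊆ (S.filter fun s => s < j) := by
      intro s hsm
      simp only [Finset.mem_filter] at hsm ⊢
      exact ⟨hsm.1, hsm.2.trans hij⟩
    have c1 := Finset.card_le_card hsub1
    have c2 := Finset.card_le_card hsub2
    simp only [bdiff, bindL, bindU] at hineg ⊢
    push_cast at hineg ⊢
    omega
end

section
/- Let m = (σ,S) ∈ PM*(n₁,…,n_k) have at least one homogeneous edge with negative block difference, and let i = min{j : e_j is homogeneous and bdiff_m(e_j) < 0}. If e_i is not convertible in m, then the set {j < i : e_j is homogeneous, bdiff_m(e_j) = 0, and e_j crosses e_i} is nonempty. -/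
open scoped Classical
open Finset

section aux
variable {N : ℕ}

lemma card_mono_nat (S : Finset (Fin N)) (f : Fin N → ℕ) {a b : ℕ} (h : a ≤ b) :
    (S.filter fun x => f x < a).card ≤ (S.filter fun x => f x < b).card := by
  apply Finset.card_le_card
  intro x hx
  simp only [Finset.mem_filter] at *
  exact ⟨hx.1, lt_of_lt_of_le hx.2 h⟩

lemma card_insert_lt (S : Finset (Fin N)) (f : Fin N → ℕ) {j : Fin N} (hj : j ∈ S)
    {c : ℕ} (hc : f j < c) :
    (S.filter fun x => f x < f j).card + 1 ≤ (S.filter fun x => f x < c).card := by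
  have hni : j ∉ S.filter fun x => f x < f j := by simp
  have hsub : insert j (S.filter fun x => f x < f j) ⊆ S.filter fun x => f x < c := by
    intro x hx
    rcases Finset.mem_insert.mp hx with rfl | hx
    · simp only [Finset.mem_filter]; exact ⟨hj, hc⟩
    · simp only [Finset.mem_filter] at *
      exact ⟨hx.1, hx.2.trans hc⟩
  calc (S.filter fun x => f x < f j).card + 1
      = (insert j (S.filter fun x => f x < f j)).card := (Finset.card_insert_of_notMem hni).symm
    _ ≤ _ := Finset.card_le_card hsub

lemma split_card (S : Finset (Fin N)) (p : Fin N → Prop) [DecidablePred p] :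
    (univ.filter p).card = (S.filter p).card + (univ.filter fun t => p t ∧ t ∉ S).card := by
  classical
  have e1 : (univ.filter p).filter (fun t => t ∈ S) = S.filter p := by
    ext t; simp [and_comm]
  have e2 : (univ.filter p).filter (fun t => ¬ t ∈ S)
      = univ.filter fun t => p t ∧ t ∉ S := by
    ext t; simp
  have := Finset.card_filter_add_card_filter_not
    (s := univ.filter p) (p := fun t => t ∈ S)
  rw [e1, e2] at this
  omega

lemma cut_card (σ : Equiv.Perm (Fin N)) (S : Finset (Fin N)) (c : ℕ)
    (hcut : ∀ t : Fin N, t ∉ S → (((t : ℕ) < c) ↔ ((σ t : ℕ) < c))) :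
    (S.filter fun x : Fin N => ((σ x : ℕ)) < c).card = (S.filter fun x : Fin N => ((x : ℕ)) < c).card := by
  have h1 : (univ.filter fun t : Fin N => ((σ t : ℕ)) < c).card
      = (univ.filter fun t : Fin N => ((t : ℕ)) < c).card := by
    apply Finset.card_bij (fun a _ => σ a)
    · intro a ha; simp only [Finset.mem_filter, Finset.mem_univ, true_and] at *; exact ha
    · intro a _ b _ h; exact σ.injective h
    · intro b hb
      refine ⟨σ.symm b, ?_, by simp⟩
      simp only [Finset.mem_filter, Finset.mem_univ, true_and] at *
      simpa using hb
  have h3 : (univ.filter fun t : Fin N => ((t : ℕ)) < c ∧ t ∉ S)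
      = (univ.filter fun t : Fin N => ((σ t : ℕ)) < c ∧ t ∉ S) := by
    ext t
    simp only [Finset.mem_filter, Finset.mem_univ, true_and]
    constructor
    · rintro ⟨h, hs⟩; exact ⟨(hcut t hs).mp h, hs⟩
    · rintro ⟨h, hs⟩; exact ⟨(hcut t hs).mpr h, hs⟩
  have s1 := split_card S (fun t => ((σ t : ℕ)) < c)
  have s2 := split_card S (fun t => ((t : ℕ)) < c)
  beta_reduce at s1 s2
  rw [h3] at s2
  omega

lemma bdiff_eq (σ : Equiv.Perm (Fin N)) (S : Finset (Fin N)) (t : Fin N) :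
    bdiff σ S t = ((S.filter fun x : Fin N => ((σ x : ℕ)) < ((σ t : ℕ))).card : ℤ)
      - ((S.filter fun x : Fin N => ((x : ℕ)) < ((t : ℕ))).card : ℤ) := by
  simp only [bdiff, bindL, bindU, Fin.lt_def]
  push_cast
  ring

lemma bdiff_cross (σ : Equiv.Perm (Fin N)) (S : Finset (Fin N)) {j i : Fin N}
    (h1 : j < i) (h2 : σ i < σ j) :
    bdiff σ S i + (if i ∈ S then 1 else 0) + (if j ∈ S then 1 else 0) ≤ bdiff σ S j := by
  have hA : (S.filter fun x : Fin N => ((x:ℕ)) < ((j:ℕ))).card + (if j ∈ S then 1 else 0)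
      ≤ (S.filter fun x : Fin N => ((x:ℕ)) < ((i:ℕ))).card := by
    by_cases hj : j ∈ S
    · rw [if_pos hj]; exact card_insert_lt S (fun x => (x:ℕ)) hj (Fin.lt_def.mp h1)
    · rw [if_neg hj]
      simpa using card_mono_nat S (fun x => (x:ℕ)) (le_of_lt (Fin.lt_def.mp h1))
  have hB : (S.filter fun x : Fin N => ((σ x : ℕ)) < ((σ i : ℕ))).card + (if i ∈ S then 1 else 0)
      ≤ (S.filter fun x : Fin N => ((σ x : ℕ)) < ((σ j : ℕ))).card := by
    by_cases hi : i ∈ S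
    · rw [if_pos hi]; exact card_insert_lt S (fun x => ((σ x : ℕ))) hi (Fin.lt_def.mp h2)
    · rw [if_neg hi]
      simpa using card_mono_nat S (fun x => ((σ x : ℕ))) (le_of_lt (Fin.lt_def.mp h2))
  rw [bdiff_eq, bdiff_eq]
  split_ifs at hA hB ⊢ <;> omega

end aux

section offlem
variable {k : ℕ} (n : Fin k → ℕ)

lemma offA {r' r : Fin k} (h : r' < r) : off n r' + n r' ≤ off n r := by
  have key : off n r' + n r'
      = ∑ s : Fin k, ((if s < r' then n s else 0) + (if s = r' then n s else 0)) := by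
    rw [Finset.sum_add_distrib]
    congr 1
    rw [Finset.sum_ite_eq' Finset.univ r' n]
    simp
  rw [key, off]
  apply Finset.sum_le_sum
  intro s _
  by_cases h1 : s < r'
  · rw [if_pos h1, if_neg h1.ne, if_pos (h1.trans h)]; omega
  · by_cases h2 : s = r'
    · subst h2; rw [if_neg h1, if_pos rfl, if_pos h]; omega
    · rw [if_neg h1, if_neg h2]; omega

lemma offD {r r' : Fin k} (h : r ≤ r') : off n r ≤ off n r' := by
  apply Finset.sum_le_sum
  intro s _
  by_cases ha : s < r
  · rw [if_pos ha, if_pos (ha.trans_le h)]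
  · rw [if_neg ha]; exact Nat.zero_le _

lemma offB {r' r : Fin k} (h : r' ≤ r) : off n r' + n r' ≤ off n r + n r := by
  rcases lt_or_eq_of_le h with h' | h'
  · exact le_trans (offA n h') (Nat.le_add_right _ _)
  · subst h'; exact le_rfl

end offlem

lemma inhom_bdiff {k N : ℕ} (n : Fin k → ℕ) (σ : Equiv.Perm (Fin N)) (S : Finset (Fin N))
    (hS : ValidMark n σ S) {i j : Fin N} (hih : HomEdge n σ i) (hj : ¬ HomEdge n σ j)
    (h1 : j < i) (h2 : σ i < σ j) : 1 ≤ bdiff σ S j := by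
  obtain ⟨r, hr1, hr2, hr3, hr4⟩ := hih
  have hjS : j ∈ S := hS j hj
  have homOf : ∀ t : Fin N, t ∉ S → HomEdge n σ t := fun t ht => by
    by_contra hh; exact ht (hS t hh)
  have hcases : (j:ℕ) < off n r ∨ off n r + n r ≤ ((σ j : ℕ)) := by
    by_contra hcon
    push_neg at hcon
    exact hj ⟨r, hcon.1, lt_trans (Fin.lt_def.mp h1) hr2,
      le_of_lt (lt_of_le_of_lt hr3 (Fin.lt_def.mp h2)), hcon.2⟩
  obtain ⟨c, hc1, hc2, hcut⟩ :
      ∃ c : ℕ, (j:ℕ) < c ∧ c ≤ ((σ j : ℕ)) ∧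
        ∀ t : Fin N, t ∉ S → (((t:ℕ) < c) ↔ ((σ t : ℕ) < c)) := by
    rcases hcases with hca | hca
    · refine ⟨off n r, hca, le_of_lt (lt_of_le_of_lt hr3 (Fin.lt_def.mp h2)), ?_⟩
      intro t ht
      obtain ⟨r', b1, b2, b3, b4⟩ := homOf t ht
      rcases lt_or_ge r' r with h' | h'
      · have := offA n h'
        exact iff_of_true (by omega) (by omega)
      · have := offD n h'
        exact iff_of_false (by omega) (by omega)
    · refine ⟨off n r + n r, lt_trans (Fin.lt_def.mp h1) hr2, hca, ?_⟩
      intro t ht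
      obtain ⟨r', b1, b2, b3, b4⟩ := homOf t ht
      rcases le_or_gt r' r with h' | h'
      · have := offB n h'
        exact iff_of_true (by omega) (by omega)
      · have := offA n h'
        exact iff_of_false (by omega) (by omega)
  have k1 : (S.filter fun x : Fin N => ((x:ℕ)) < ((j:ℕ))).card + 1
      ≤ (S.filter fun x : Fin N => ((x:ℕ)) < c).card :=
    card_insert_lt S (fun x => (x:ℕ)) hjS hc1
  have k2 := cut_card σ S c hcut
  have k3 : (S.filter fun x : Fin N => ((σ x : ℕ)) < c).card
      ≤ (S.filter fun x : Fin N => ((σ x : ℕ)) < ((σ j:ℕ))).card :=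
    card_mono_nat S (fun x => ((σ x : ℕ))) hc2
  rw [bdiff_eq]
  omega


/-- Lemma 4.3: under the hypotheses of Statement 7, the set
{j < i : e_j homogeneous, bdiff(e_j) = 0, e_j crosses e_i} is nonempty. -/
theorem exists_crossing_zero_bdiff {k N : ℕ} (n : Fin k → ℕ)
    (hn : ∀ r, 0 < n r) (hN : N = ∑ r, n r)
    (σ : Equiv.Perm (Fin N)) (S : Finset (Fin N)) (hS : ValidMark n σ S)
    (i : Fin N) (hih : HomEdge n σ i) (hineg : bdiff σ S i < 0)
    (hmin : ∀ j, HomEdge n σ j → bdiff σ S j < 0 → i ≤ j)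
    (hnc : ¬ Convertible σ S i) :
    ∃ j, j < i ∧ HomEdge n σ j ∧ bdiff σ S j = 0 ∧ CrossLeft σ j i := by
  have right : ∀ j, CrossLeft σ i j → bdiff σ S j + (if i ∈ S then 1 else 0) ≤ -1 := by
    intro j hj
    have h := bdiff_cross σ S (j := i) (i := j) hj.1 hj.2
    split_ifs at h ⊢ <;> omega
  have left0 : ∀ j, CrossLeft σ j i → 0 ≤ bdiff σ S j ∧ (bdiff σ S j = 0 → HomEdge n σ j) := by
    intro j hj
    by_cases hh : HomEdge n σ j
    · refine ⟨?_, fun _ => hh⟩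
      by_contra hneg
      push_neg at hneg
      exact absurd (hmin j hh hneg) (not_le.mpr hj.1)
    · have h1 := inhom_bdiff n σ S hS hih hh hj.1 hj.2
      exact ⟨by omega, fun h0 => by omega⟩
  by_cases hiS : i ∈ S
  · have hright : ∀ j, CrossLeft σ i j → bdiff σ S j < -1 := by
      intro j hj
      have := right j hj
      rw [if_pos hiS] at this
      omega
    have hleft : ¬ ∀ j, CrossLeft σ j i → 0 < bdiff σ S j := by
      intro hall
      exact hnc (by unfold Convertible; rw [if_pos hiS]; exact ⟨hall, hright⟩)
    push_neg at hleft
    obtain ⟨j, hji, hle⟩ := hleft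
    obtain ⟨h0, hhom⟩ := left0 j hji
    have hz : bdiff σ S j = 0 := le_antisymm hle h0
    exact ⟨j, hji.1, hhom hz, hz, hji⟩
  · refine absurd ?_ hnc
    unfold Convertible
    rw [if_neg hiS]
    refine ⟨fun j hj => (left0 j hj).1, fun j hj => ?_⟩
    have := right j hj
    rw [if_neg hiS] at this
    omega
end

section
/- Let m = (σ,S) ∈ PM*(n₁,…,n_k), let e_i be a homogeneous edge with i ∉ S, and let m' = (σ, S ∪ {i}). Then bdiff_{m'}(e_i) = bdiff_m(e_i), and for every edge e_j with j ≠ i: if e_j and e_i do not cross, bdiff_{m'}(e_j) = bdiff_m(e_j); if j < i and σ(j) > σ(i), bdiff_{m'}(e_j) = bdiff_m(e_j) + 1; and if j > i and σ(j) < σ(i), bdiff_{m'}(e_j) = bdiff_m(e_j) − 1. -/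
open scoped Classical
open Finset

lemma bindU_insert' {N : ℕ} (S : Finset (Fin N)) (i j : Fin N) (h : i ∉ S) :
    bindU (insert i S) j = bindU S j + (if i < j then 1 else 0) := by
  unfold bindU
  rw [Finset.filter_insert]
  split
  · rw [Finset.card_insert_of_notMem (fun hm => h (Finset.mem_filter.1 hm).1)]; omega
  · omega

lemma bindL_insert' {N : ℕ} (σ : Equiv.Perm (Fin N)) (S : Finset (Fin N)) (i : Fin N)
    (l : Fin N) (h : i ∉ S) :
    bindL σ (insert i S) l = bindL σ S l + (if σ i < l then 1 else 0) := by
  unfold bindL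
  rw [Finset.filter_insert]
  split
  · rw [Finset.card_insert_of_notMem (fun hm => h (Finset.mem_filter.1 hm).1)]; omega
  · omega

lemma bdiff_insert' {N : ℕ} (σ : Equiv.Perm (Fin N)) (S : Finset (Fin N)) (i j : Fin N)
    (h : i ∉ S) :
    bdiff σ (insert i S) j =
      bdiff σ S j + (if σ i < σ j then 1 else 0) - (if i < j then 1 else 0) := by
  unfold bdiff
  rw [bindU_insert' S i j h, bindL_insert' σ S i (σ j) h]
  push_cast
  split <;> split <;> ring

/-- change of block differences when marking an unmarked
homogeneous edge e_i. -/
theorem bdiff_after_marking {k N : ℕ} (n : Fin k → ℕ)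
    (hn : ∀ r, 0 < n r) (hN : N = ∑ r, n r)
    (σ : Equiv.Perm (Fin N)) (S : Finset (Fin N)) (hS : ValidMark n σ S)
    (i : Fin N) (hih : HomEdge n σ i) (hiS : i ∉ S) :
    bdiff σ (insert i S) i = bdiff σ S i ∧
    ∀ j, j ≠ i →
      (¬ (CrossLeft σ j i ∨ CrossLeft σ i j) → bdiff σ (insert i S) j = bdiff σ S j) ∧
      (CrossLeft σ j i → bdiff σ (insert i S) j = bdiff σ S j + 1) ∧
      (CrossLeft σ i j → bdiff σ (insert i S) j = bdiff σ S j - 1) := by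
  constructor
  · rw [bdiff_insert' σ S i i hiS]; simp
  · intro j hj
    have hσ : σ j ≠ σ i := fun h => hj (σ.injective h)
    refine ⟨fun hnc => ?_, fun hc => ?_, fun hc => ?_⟩
    · rw [bdiff_insert' σ S i j hiS]
      unfold CrossLeft at hnc
      push_neg at hnc
      rcases lt_or_gt_of_ne hj with h1 | h1
      · have h2 : σ j < σ i := lt_of_le_of_ne (hnc.1 h1) hσ
        simp [not_lt_of_gt h1, not_lt_of_gt h2]
      · have h2 : σ i < σ j := lt_of_le_of_ne (hnc.2 h1) (Ne.symm hσ)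
        simp [h1, h2, not_lt_of_gt h1]
    · obtain ⟨h1, h2⟩ := hc
      rw [bdiff_insert' σ S i j hiS]
      simp [h2, not_lt_of_gt h1]
    · obtain ⟨h1, h2⟩ := hc
      rw [bdiff_insert' σ S i j hiS]
      simp [h1, not_lt_of_gt h2]
end

section
/- Let m = (σ,S) ∈ PM*(n₁,…,n_k) have at least one homogeneous edge, and suppose bdiff_m(e) ≥ 0 for every homogeneous edge e of m. Let i be the index with σ(i) = min{σ(j) : e_j is homogeneous}. Then e_i is convertible in m. -/
open scoped Classical
open Finset

namespace ConvAux

variable {k N : ℕ}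

theorem card_filter_val_lt (c : ℕ) (hc : c ≤ N) :
    (univ.filter fun x : Fin N => (x : ℕ) < c).card = c := by
  have h : (univ.filter fun x : Fin N => (x : ℕ) < c).card = (range c).card := by
    refine Finset.card_bij' (fun x _ => (x : ℕ))
      (fun a ha => (⟨a, lt_of_lt_of_le (mem_range.1 ha) hc⟩ : Fin N)) ?_ ?_ ?_ ?_
    · intro a ha; simpa using (mem_filter.1 ha).2
    · intro a ha; simpa using mem_range.1 ha
    · intro a ha; rfl
    · intro a ha; rfl
  simpa using h

theorem off_add_le (n : Fin k → ℕ) {r' r : Fin k} (h : r' < r) :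
    off n r' + n r' ≤ off n r := by
  have e : ∀ t : Fin k, off n t = ∑ s ∈ univ.filter (fun s : Fin k => s < t), n s :=
    fun t => (Finset.sum_filter _ _).symm
  have hr' : r' ∉ univ.filter (fun s : Fin k => s < r') := by simp
  have hsub : insert r' (univ.filter (fun s : Fin k => s < r')) ⊆
      univ.filter (fun s : Fin k => s < r) := by
    intro x hx
    rcases Finset.mem_insert.1 hx with hx | hx
    · subst hx; simpa using h
    · simp only [mem_filter, mem_univ, true_and] at hx ⊢
      exact hx.trans h
  rw [e, e]
  have e2 : ∑ s ∈ univ.filter (fun s : Fin k => s < r'), n s + n r'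
      = ∑ s ∈ insert r' (univ.filter (fun s : Fin k => s < r')), n s := by
    rw [Finset.sum_insert hr']; ring
  rw [e2]
  exact Finset.sum_le_sum_of_subset hsub

theorem bdiff_eq (σ : Equiv.Perm (Fin N)) (S : Finset (Fin N)) (j : Fin N) :
    bdiff σ S j = ((S.filter fun x => σ x < σ j).card : ℤ)
      - ((S.filter fun x => x < j).card : ℤ) := by
  unfold bdiff bindL bindU
  push_cast
  ring

end ConvAux

/-- Case 1 of Lemma 4.4: when all homogeneous edges have
nonnegative block difference, the homogeneous edge with minimal lower endpoint
is convertible. -/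
theorem min_lower_endpoint_convertible {k N : ℕ} (n : Fin k → ℕ)
    (hn : ∀ r, 0 < n r) (hN : N = ∑ r, n r)
    (σ : Equiv.Perm (Fin N)) (S : Finset (Fin N)) (hS : ValidMark n σ S)
    (hpos : ∀ j, HomEdge n σ j → 0 ≤ bdiff σ S j)
    (i : Fin N) (hih : HomEdge n σ i)
    (hmin : ∀ j, HomEdge n σ j → σ i ≤ σ j) :
    Convertible σ S i := by
  classical
  obtain ⟨r, hoi, him, hosi, hsim⟩ := hih
  set o : ℕ := off n r with ho
  set m : ℕ := n r with hm
  -- every x with σ x < σ i is marked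
  have hmin' : ∀ x : Fin N, (σ x : ℕ) < (σ i : ℕ) → x ∈ S := by
    intro x hx
    refine hS x (fun hhom => ?_)
    exact absurd hx (not_lt.2 (hmin x hhom))
  -- bindL-count at values ≤ σ i
  have hLval : ∀ v : Fin N, (v : ℕ) ≤ (σ i : ℕ) →
      (S.filter fun x => σ x < v).card = (v : ℕ) := by
    intro v hv
    have h1 : (S.filter fun x => σ x < v) = univ.filter fun x => σ x < v := by
      ext x
      simp only [mem_filter, mem_univ, true_and, and_iff_right_iff_imp]
      intro hx
      exact hmin' x (lt_of_lt_of_le hx hv)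
    rw [h1]
    have h2 : (univ.filter fun x => σ x < v).card
        = (univ.filter fun y : Fin N => (y : ℕ) < (v : ℕ)).card := by
      refine Finset.card_bij' (fun x _ => σ x) (fun y _ => σ.symm y) ?_ ?_ ?_ ?_
      · intro a ha; simp only [mem_filter, mem_univ, true_and] at ha ⊢; exact ha
      · intro a ha; simp only [mem_filter, mem_univ, true_and] at ha ⊢; simpa using ha
      · intro a ha; simp
      · intro a ha; simp
    rw [h2]
    exact ConvAux.card_filter_val_lt (v : ℕ) (le_of_lt v.isLt)
  -- hpos at i
  have hhomi : HomEdge n σ i := ⟨r, hoi, him, hosi, hsim⟩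
  have hUi : ((S.filter fun x => x < i).card : ℤ) ≤ ((σ i : ℕ) : ℤ) := by
    have := hpos i hhomi
    rw [ConvAux.bdiff_eq] at this
    rw [hLval (σ i) le_rfl] at this
    omega
  -- all positions left of the block are inhomogeneous
  have hleft : ∀ x : Fin N, (x : ℕ) < o → ¬ HomEdge n σ x := by
    intro x hx ⟨r', h1, h2, h3, h4⟩
    rcases lt_trichotomy r' r with hr | hr | hr
    · have hle := ConvAux.off_add_le n hr
      have : (σ x : ℕ) < (σ i : ℕ) := lt_of_lt_of_le h4 (le_trans hle hosi)
      exact absurd this (not_lt.2 (hmin x ⟨r', h1, h2, h3, h4⟩))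
    · subst hr; omega
    · have hle := ConvAux.off_add_le n hr
      have : o + m ≤ (x : ℕ) := le_trans hle h1
      omega
  -- homogeneous edges inside the block window have values in [σ i, o + m)
  have hhomval : ∀ x : Fin N, (x : ℕ) < o + m → HomEdge n σ x →
      (σ i : ℕ) ≤ (σ x : ℕ) ∧ (σ x : ℕ) < o + m := by
    intro x hx hhom
    obtain ⟨r', h1, h2, h3, h4⟩ := hhom
    refine ⟨hmin x ⟨r', h1, h2, h3, h4⟩, ?_⟩
    rcases lt_trichotomy r' r with hr | hr | hr
    · have hle := ConvAux.off_add_le n hr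
      omega
    · subst hr; omega
    · have hle := ConvAux.off_add_le n hr
      omega
  -- Core counting bound for right crossers
  have hcore : ∀ j : Fin N, (i : ℕ) < (j : ℕ) → (σ j : ℕ) < (σ i : ℕ) →
      ∀ χ : ℕ, (i ∈ S → χ = 1) → (i ∉ S → χ = 0) →
      (σ j : ℕ) + 1 + χ ≤ (S.filter fun x => x < j).card := by
    intro j hij hsji χ hχ1 hχ0
    by_cases hcase : (σ j : ℕ) < o
    · -- Case 1: value left of the block
      set T : Finset (Fin N) := univ.filter fun x : Fin N => (x : ℕ) < o with hT
      have hTsub : T ⊆ S.filter fun x => x < j := by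
        intro x hx
        simp only [hT, mem_filter, mem_univ, true_and] at hx
        refine mem_filter.2 ⟨hS x (hleft x hx), ?_⟩
        rw [Fin.lt_def]; omega
      have hTcard : T.card = o := ConvAux.card_filter_val_lt o (by omega)
      by_cases hiS : i ∈ S
      · have hiT : i ∉ T := by simp [hT]; omega
        have hsub2 : insert i T ⊆ S.filter fun x => x < j := by
          intro x hx
          rcases Finset.mem_insert.1 hx with hx | hx
          · subst hx; exact mem_filter.2 ⟨hiS, by rw [Fin.lt_def]; omega⟩
          · exact hTsub hx
        have := Finset.card_le_card hsub2
        rw [Finset.card_insert_of_notMem hiT, hTcard] at this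
        have := hχ1 hiS
        omega
      · have := Finset.card_le_card hTsub
        rw [hTcard] at this
        have := hχ0 hiS
        omega
    · -- Case 2: value inside the block, so j is right of the block
      push_neg at hcase
      have hjom : o + m ≤ (j : ℕ) := by
        by_contra hcon
        push_neg at hcon
        have : HomEdge n σ j := ⟨r, by omega, by omega, by omega, by omega⟩
        have := hmin j this
        rw [Fin.le_def] at this
        omega
      have homN : o + m ≤ N := le_trans hjom (le_of_lt j.isLt)
      set s0 : Finset (Fin N) := univ.filter fun x : Fin N => (x : ℕ) < o + m with hs0
      have hs0card : s0.card = o + m := ConvAux.card_filter_val_lt (o + m) homN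
      set H : Finset (Fin N) := s0.filter fun x => HomEdge n σ x with hH
      set T : Finset (Fin N) := s0.filter fun x => ¬ HomEdge n σ x with hTd
      have hsplit : H.card + T.card = o + m := by
        rw [← hs0card]
        exact Finset.card_filter_add_card_filter_not _
      -- H injects into the value window [σ i, o+m)
      have hHcard : H.card ≤ (o + m) - (σ i : ℕ) := by
        have hmaps : ∀ x ∈ H, σ x ∈ univ.filter
            fun v : Fin N => (σ i : ℕ) ≤ (v : ℕ) ∧ (v : ℕ) < o + m := by
          intro x hx
          simp only [hH, hs0, mem_filter, mem_univ, true_and] at hx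
          obtain ⟨h1, h2⟩ := hhomval x hx.1 hx.2
          simp only [mem_filter, mem_univ, true_and]
          exact ⟨h1, h2⟩
        have hinj : Set.InjOn (fun x => σ x) H := fun a _ b _ hab => σ.injective hab
        have hcle := Finset.card_le_card_of_injOn _ hmaps hinj
        have hwin : (univ.filter fun v : Fin N =>
            (σ i : ℕ) ≤ (v : ℕ) ∧ (v : ℕ) < o + m).card = (o + m) - (σ i : ℕ) := by
          have hpart : (univ.filter fun v : Fin N => (v : ℕ) < (σ i : ℕ)).card
              + (univ.filter fun v : Fin N =>
                (σ i : ℕ) ≤ (v : ℕ) ∧ (v : ℕ) < o + m).card = o + m := by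
            have e1 : (univ.filter fun v : Fin N => (v : ℕ) < o + m).filter
                (fun v : Fin N => (v : ℕ) < (σ i : ℕ)) =
                univ.filter fun v : Fin N => (v : ℕ) < (σ i : ℕ) := by
              rw [Finset.filter_filter]
              apply Finset.filter_congr
              intro v _
              constructor
              · intro hv; exact hv.2
              · intro hv; exact ⟨by omega, hv⟩
            have e2 : (univ.filter fun v : Fin N => (v : ℕ) < o + m).filter
                (fun v : Fin N => ¬ ((v : ℕ) < (σ i : ℕ))) =
                univ.filter fun v : Fin N => (σ i : ℕ) ≤ (v : ℕ) ∧ (v : ℕ) < o + m := by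
              rw [Finset.filter_filter]
              apply Finset.filter_congr
              intro v _
              constructor
              · intro hv; exact ⟨by omega, hv.1⟩
              · intro hv; exact ⟨hv.2, by omega⟩
            have := Finset.card_filter_add_card_filter_not
              (s := univ.filter fun v : Fin N => (v : ℕ) < o + m)
              (p := fun v : Fin N => (v : ℕ) < (σ i : ℕ))
            rw [e1, e2] at this
            rw [this]
            exact ConvAux.card_filter_val_lt (o + m) homN
          have hsi : (univ.filter fun v : Fin N => (v : ℕ) < (σ i : ℕ)).card = (σ i : ℕ) :=
            ConvAux.card_filter_val_lt _ (le_of_lt (σ i).isLt)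
          omega
        omega
      have hTcard : (σ i : ℕ) ≤ T.card := by omega
      have hTsub : T ⊆ S.filter fun x => x < j := by
        intro x hx
        simp only [hTd, hs0, mem_filter, mem_univ, true_and] at hx
        refine mem_filter.2 ⟨hS x hx.2, ?_⟩
        rw [Fin.lt_def]; omega
      by_cases hiS : i ∈ S
      · have hiT : i ∉ T := by
          simp only [hTd, hs0, mem_filter, mem_univ, true_and, not_and, not_not]
          intro _; exact hhomi
        have hsub2 : insert i T ⊆ S.filter fun x => x < j := by
          intro x hx
          rcases Finset.mem_insert.1 hx with hx | hx
          · subst hx; exact mem_filter.2 ⟨hiS, by rw [Fin.lt_def]; omega⟩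
          · exact hTsub hx
        have := Finset.card_le_card hsub2
        rw [Finset.card_insert_of_notMem hiT] at this
        have := hχ1 hiS
        omega
      · have := Finset.card_le_card hTsub
        have := hχ0 hiS
        omega
  -- now prove convertibility
  unfold Convertible
  by_cases hiS : i ∈ S
  · rw [if_pos hiS]
    constructor
    · -- left crossers, strict
      rintro j ⟨hji, hsij⟩
      rw [ConvAux.bdiff_eq]
      have hsub : insert i (S.filter fun x => σ x < σ i) ⊆ S.filter fun x => σ x < σ j := by
        intro x hx
        rcases Finset.mem_insert.1 hx with hx | hx
        · subst hx; exact mem_filter.2 ⟨hiS, hsij⟩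
        · refine mem_filter.2 ⟨(mem_filter.1 hx).1, lt_trans (mem_filter.1 hx).2 hsij⟩
      have hiL : i ∉ S.filter fun x => σ x < σ i := by simp
      have h1 := Finset.card_le_card hsub
      rw [Finset.card_insert_of_notMem hiL, hLval (σ i) le_rfl] at h1
      have h2 : (S.filter fun x => x < j).card ≤ (S.filter fun x => x < i).card := by
        apply Finset.card_le_card
        intro x hx
        exact mem_filter.2 ⟨(mem_filter.1 hx).1, lt_trans (mem_filter.1 hx).2 hji⟩
      have h3 := hUi
      push_cast
      omega
    · -- right crossers, strict
      rintro j ⟨hij, hsji⟩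
      rw [ConvAux.bdiff_eq]
      rw [Fin.lt_def] at hij hsji
      have h1 := hcore j hij hsji 1 (fun _ => rfl) (fun h => absurd hiS h)
      rw [hLval (σ j) (by omega)]
      push_cast
      omega
  · rw [if_neg hiS]
    constructor
    · -- left crossers, weak
      rintro j ⟨hji, hsij⟩
      rw [ConvAux.bdiff_eq]
      have h1 : (S.filter fun x => σ x < σ i).card ≤ (S.filter fun x => σ x < σ j).card := by
        apply Finset.card_le_card
        intro x hx
        exact mem_filter.2 ⟨(mem_filter.1 hx).1, lt_trans (mem_filter.1 hx).2 hsij⟩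
      rw [hLval (σ i) le_rfl] at h1
      have h2 : (S.filter fun x => x < j).card ≤ (S.filter fun x => x < i).card := by
        apply Finset.card_le_card
        intro x hx
        exact mem_filter.2 ⟨(mem_filter.1 hx).1, lt_trans (mem_filter.1 hx).2 hji⟩
      have h3 := hUi
      push_cast
      omega
    · -- right crossers, weak
      rintro j ⟨hij, hsji⟩
      rw [ConvAux.bdiff_eq]
      rw [Fin.lt_def] at hij hsji
      have h1 := hcore j hij hsji 0 (fun h => absurd h hiS) (fun _ => rfl)
      rw [hLval (σ j) (by omega)]
      push_cast
      omega
end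

section
/- Let m = (σ,S) ∈ PM*(n₁,…,n_k) have at least one homogeneous edge with negative block difference, and let i = min{j : e_j is homogeneous and bdiff_m(e_j) < 0}. Suppose e_i is not convertible in m. Then the set {j < i : e_j is homogeneous, bdiff_m(e_j) = 0, and e_j crosses e_i} is nonempty, and for i' its maximum, the edge e_{i'} is convertible in m. -/
open scoped Classical
open Finset

/-! Auxiliary lemmas for the proof -/

section AuxProof

lemma split_count {N : ℕ} (S : Finset (Fin N)) (f : Fin N → Fin N)
    (x y : Fin N) (h : f y < f x) :
    (S.filter fun t => f t < f y).card + (if y ∈ S then 1 else 0)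
      + (S.filter fun t => f y < f t ∧ f t < f x).card
      ≤ (S.filter fun t => f t < f x).card := by
  classical
  by_cases hy : y ∈ S
  · rw [if_pos hy]
    have hsub : (S.filter fun t => f t < f y) ∪
        insert y (S.filter fun t => f y < f t ∧ f t < f x) ⊆
        S.filter fun t => f t < f x := by
      intro t ht
      simp only [Finset.mem_union, Finset.mem_insert, Finset.mem_filter] at ht ⊢
      rcases ht with ⟨h1, h2⟩ | (rfl | ⟨h1, h2, h3⟩)
      · exact ⟨h1, h2.trans h⟩
      · exact ⟨hy, h⟩
      · exact ⟨h1, h3⟩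
    have hd : Disjoint (S.filter fun t => f t < f y)
        (insert y (S.filter fun t => f y < f t ∧ f t < f x)) := by
      rw [Finset.disjoint_left]
      intro t ht ht'
      simp only [Finset.mem_filter] at ht
      rcases Finset.mem_insert.mp ht' with rfl | ht''
      · exact lt_irrefl _ ht.2
      · simp only [Finset.mem_filter] at ht''
        exact lt_asymm ht.2 ht''.2.1
    have hm : y ∉ (S.filter fun t => f y < f t ∧ f t < f x) := by
      simp only [Finset.mem_filter]
      rintro ⟨-, h1, -⟩
      exact lt_irrefl _ h1
    have hcard := Finset.card_le_card hsub
    rw [Finset.card_union_of_disjoint hd, Finset.card_insert_of_notMem hm] at hcard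
    omega
  · rw [if_neg hy]
    have hsub : (S.filter fun t => f t < f y) ∪
        (S.filter fun t => f y < f t ∧ f t < f x) ⊆
        S.filter fun t => f t < f x := by
      intro t ht
      simp only [Finset.mem_union, Finset.mem_filter] at ht ⊢
      rcases ht with ⟨h1, h2⟩ | ⟨h1, h2, h3⟩
      · exact ⟨h1, h2.trans h⟩
      · exact ⟨h1, h3⟩
    have hd : Disjoint (S.filter fun t => f t < f y)
        (S.filter fun t => f y < f t ∧ f t < f x) := by
      rw [Finset.disjoint_left]
      intro t ht ht'
      simp only [Finset.mem_filter] at ht ht'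
      exact lt_asymm ht.2 ht'.2.1
    have hcard := Finset.card_le_card hsub
    rw [Finset.card_union_of_disjoint hd] at hcard
    omega

/-- The refined crossing inequality. -/
lemma F1 {N : ℕ} (σ : Equiv.Perm (Fin N)) (S : Finset (Fin N)) {a b : Fin N}
    (h : CrossLeft σ a b) :
    bdiff σ S b + (if a ∈ S then (1:ℤ) else 0) + (if b ∈ S then (1:ℤ) else 0)
      + ((S.filter fun t => a < t ∧ t < b).card : ℤ)
      + ((S.filter fun t => σ b < σ t ∧ σ t < σ a).card : ℤ)
      ≤ bdiff σ S a := by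
  classical
  obtain ⟨hab, hba⟩ := h
  have h1 := split_count S (fun t => t) b a hab
  have h2 := split_count S (fun t => σ t) a b hba
  unfold bdiff bindL bindU
  by_cases haS : a ∈ S <;> by_cases hbS : b ∈ S <;>
    simp only [haS, hbS, if_true, if_false] at h1 h2 ⊢ <;> push_cast <;> omega

/-- The crossing inequality, weak form. -/
lemma F1w {N : ℕ} (σ : Equiv.Perm (Fin N)) (S : Finset (Fin N)) {a b : Fin N}
    (h : CrossLeft σ a b) :
    bdiff σ S b + (if a ∈ S then (1:ℤ) else 0) + (if b ∈ S then (1:ℤ) else 0)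
      ≤ bdiff σ S a := by
  have hF := F1 σ S h
  have c1 : (0:ℤ) ≤ ((S.filter fun t => a < t ∧ t < b).card : ℤ) := Nat.cast_nonneg _
  have c2 : (0:ℤ) ≤ ((S.filter fun t => σ b < σ t ∧ σ t < σ a).card : ℤ) := Nat.cast_nonneg _
  linarith

lemma off_le_off {k : ℕ} (n : Fin k → ℕ) {r ρ : Fin k} (h : r ≤ ρ) :
    off n r ≤ off n ρ := by
  unfold off
  refine Finset.sum_le_sum fun s _ => ?_
  by_cases hs : s < r
  · rw [if_pos hs, if_pos (lt_of_lt_of_le hs h)]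
  · rw [if_neg hs]
    exact Nat.zero_le _

lemma off_add {k : ℕ} (n : Fin k → ℕ) (r : Fin k) :
    off n r + n r = ∑ s : Fin k, if s ≤ r then n s else 0 := by
  unfold off
  have key : ∀ s : Fin k, (if s ≤ r then n s else 0)
      = (if s < r then n s else 0) + (if s = r then n s else 0) := by
    intro s
    by_cases h1 : s < r
    · rw [if_pos (le_of_lt h1), if_pos h1, if_neg (ne_of_lt h1), add_zero]
    · by_cases h2 : s = r
      · subst h2; rw [if_pos le_rfl, if_neg h1, if_pos rfl, zero_add]
      · rw [if_neg (fun hle => (lt_or_eq_of_le hle).elim h1 h2), if_neg h1, if_neg h2]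
    
  rw [Finset.sum_congr rfl (fun s _ => key s), Finset.sum_add_distrib,
    Finset.sum_ite_eq' Finset.univ r n, if_pos (Finset.mem_univ r)]

lemma bdry1 {k : ℕ} (n : Fin k → ℕ) (ρ : Fin k) :
    ∀ r : Fin k, ¬ (off n r < off n ρ ∧ off n ρ < off n r + n r) := by
  rintro r ⟨h1, h2⟩
  have hr : r < ρ := by
    by_contra hc
    exact absurd (off_le_off n (not_lt.mp hc)) (not_le.mpr h1)
  have hle : off n r + n r ≤ off n ρ := by
    rw [off_add]
    unfold off
    refine Finset.sum_le_sum fun s _ => ?_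
    by_cases hs : s ≤ r
    · rw [if_pos hs, if_pos (lt_of_le_of_lt hs hr)]
    · rw [if_neg hs]; exact Nat.zero_le _
  omega

lemma bdry2 {k : ℕ} (n : Fin k → ℕ) (ρ : Fin k) :
    ∀ r : Fin k, ¬ (off n r < off n ρ + n ρ ∧ off n ρ + n ρ < off n r + n r) := by
  rintro r ⟨h1, h2⟩
  rcases le_or_gt r ρ with h | h
  · have hle : off n r + n r ≤ off n ρ + n ρ := by
      rw [off_add, off_add]
      refine Finset.sum_le_sum fun s _ => ?_
      by_cases hs : s ≤ r
      · rw [if_pos hs, if_pos (le_trans hs h)]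
      · rw [if_neg hs]; exact Nat.zero_le _
    omega
  · have hle : off n ρ + n ρ ≤ off n r := by
      rw [off_add]
      unfold off
      refine Finset.sum_le_sum fun s _ => ?_
      by_cases hs : s ≤ ρ
      · rw [if_pos hs, if_pos (lt_of_le_of_lt hs h)]
      · rw [if_neg hs]; exact Nat.zero_le _
    omega

/-- Boundary counting lemma: marked edges with upper endpoint left of a block
boundary are equinumerous with marked edges with lower endpoint left of it. -/
lemma boundary_count {k N : ℕ} (n : Fin k → ℕ) (σ : Equiv.Perm (Fin N))
    (S : Finset (Fin N)) (hS : ValidMark n σ S) (c : ℕ)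
    (hc : ∀ r : Fin k, ¬ (off n r < c ∧ c < off n r + n r)) :
    (S.filter fun t : Fin N => (t : ℕ) < c).card = (S.filter fun t : Fin N => ((σ t : Fin N) : ℕ) < c).card := by
  classical
  set P : Fin N → Prop := fun t => (t : ℕ) < c with hP
  set Q : Fin N → Prop := fun t => ((σ t : Fin N) : ℕ) < c with hQ
  have hmark : ∀ t : Fin N, (P t ∧ ¬ Q t) ∨ (Q t ∧ ¬ P t) → t ∈ S := by
    intro t ht
    apply hS
    rintro ⟨r, hr1, hr2, hr3, hr4⟩
    have hbd := hc r
    rcases ht with ⟨h1, h2⟩ | ⟨h1, h2⟩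
    · have hoc : off n r < c := lt_of_le_of_lt hr1 h1
      have : ¬ c < off n r + n r := fun hcc => hbd ⟨hoc, hcc⟩
      exact h2 (lt_of_lt_of_le hr4 (not_lt.mp this))
    · have hoc : off n r < c := lt_of_le_of_lt hr3 h1
      have : ¬ c < off n r + n r := fun hcc => hbd ⟨hoc, hcc⟩
      exact h2 (lt_of_lt_of_le hr2 (not_lt.mp this))
  have hglob : (Finset.univ.filter Q).card = (Finset.univ.filter P).card := by
    have himg : Finset.univ.filter Q = (Finset.univ.filter P).image σ.symm := by
      ext u
      simp only [Finset.mem_filter, Finset.mem_image, Finset.mem_univ, true_and, hP, hQ]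
      constructor
      · intro hu
        exact ⟨σ u, hu, Equiv.symm_apply_apply σ u⟩
      · rintro ⟨v, hv, rfl⟩
        simpa [Equiv.apply_symm_apply] using hv
    rw [himg, Finset.card_image_of_injective _ σ.symm.injective]
  have d1 := Finset.card_filter_add_card_filter_not (s := S.filter P) (p := Q)
  have d2 := Finset.card_filter_add_card_filter_not (s := S.filter Q) (p := P)
  have u1 := Finset.card_filter_add_card_filter_not
    (s := Finset.univ.filter P (α := Fin N)) (p := Q)
  have u2 := Finset.card_filter_add_card_filter_not
    (s := Finset.univ.filter Q (α := Fin N)) (p := P)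
  simp only [Finset.filter_filter] at d1 d2 u1 u2
  have e1 : S.filter (fun t => P t ∧ ¬ Q t) = Finset.univ.filter (fun t => P t ∧ ¬ Q t) := by
    ext t
    simp only [Finset.mem_filter, Finset.mem_univ, true_and]
    exact ⟨fun h => h.2, fun h => ⟨hmark t (Or.inl h), h⟩⟩
  have e2 : S.filter (fun t => Q t ∧ ¬ P t) = Finset.univ.filter (fun t => Q t ∧ ¬ P t) := by
    ext t
    simp only [Finset.mem_filter, Finset.mem_univ, true_and]
    exact ⟨fun h => h.2, fun h => ⟨hmark t (Or.inr h), h⟩⟩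
  have a1 : (S.filter (fun t => P t ∧ Q t)).card = (S.filter (fun t => Q t ∧ P t)).card := by
    congr 1
    exact Finset.filter_congr fun t _ => and_comm
  have a2 : (Finset.univ.filter (fun t : Fin N => P t ∧ Q t)).card
      = (Finset.univ.filter (fun t : Fin N => Q t ∧ P t)).card := by
    congr 1
    exact Finset.filter_congr fun t _ => and_comm
  have ec1 := congrArg Finset.card e1
  have ec2 := congrArg Finset.card e2
  show (S.filter P).card = (S.filter Q).card
  omega

/-- A marked inhomogeneous edge crossing a homogeneous edge from the left has
positive block difference. -/
lemma F2 {k N : ℕ} (n : Fin k → ℕ) (σ : Equiv.Perm (Fin N)) (S : Finset (Fin N))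
    (hS : ValidMark n σ S) {i j : Fin N} (hih : HomEdge n σ i)
    (hcr : CrossLeft σ j i) (hjn : ¬ HomEdge n σ j) : 1 ≤ bdiff σ S j := by
  classical
  obtain ⟨ρ, hr1, hr2, hr3, hr4⟩ := hih
  obtain ⟨hji, hσ⟩ := hcr
  have hjS : j ∈ S := hS j hjn
  have hjiN : (j : ℕ) < (i : ℕ) := hji
  have hσN : ((σ i : Fin N) : ℕ) < ((σ j : Fin N) : ℕ) := hσ
  have key : ∀ c : ℕ, (∀ r : Fin k, ¬ (off n r < c ∧ c < off n r + n r)) →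
      (j : ℕ) < c → c ≤ ((σ j : Fin N) : ℕ) → 1 ≤ bdiff σ S j := by
    intro c hbdry hjc hcs
    have hBL := boundary_count n σ S hS c hbdry
    have m1 : (S.filter fun t => t < j).card + 1 ≤ (S.filter fun t : Fin N => (t : ℕ) < c).card := by
      have hsub : insert j (S.filter fun t => t < j) ⊆ S.filter fun t : Fin N => (t : ℕ) < c := by
        intro t ht
        rcases Finset.mem_insert.mp ht with rfl | ht'
        · exact Finset.mem_filter.mpr ⟨hjS, hjc⟩
        · obtain ⟨h1, h2⟩ := Finset.mem_filter.mp ht'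
          exact Finset.mem_filter.mpr ⟨h1, lt_trans (show (t : ℕ) < (j : ℕ) from h2) hjc⟩
      have hmj : j ∉ (S.filter fun t => t < j) := by
        simp only [Finset.mem_filter]
        rintro ⟨-, h1⟩
        exact lt_irrefl _ h1
      have := Finset.card_le_card hsub
      rwa [Finset.card_insert_of_notMem hmj] at this
    have m2 : (S.filter fun t : Fin N => ((σ t : Fin N) : ℕ) < c).card
        ≤ (S.filter fun t => σ t < σ j).card := by
      refine Finset.card_le_card fun t ht => ?_
      obtain ⟨h1, h2⟩ := Finset.mem_filter.mp ht
      exact Finset.mem_filter.mpr ⟨h1, show ((σ t : Fin N) : ℕ) < ((σ j : Fin N) : ℕ)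
        from lt_of_lt_of_le h2 hcs⟩
    unfold bdiff bindL bindU
    push_cast
    omega
  rcases lt_or_ge (j : ℕ) (off n ρ) with hc | hc
  · exact key (off n ρ) (bdry1 n ρ) hc (le_of_lt (lt_of_le_of_lt hr3 hσN))
  · refine key (off n ρ + n ρ) (bdry2 n ρ) (lt_trans hjiN hr2) ?_
    by_contra hcon
    push_neg at hcon
    exact hjn ⟨ρ, hc, lt_trans hjiN hr2, le_trans hr3 (le_of_lt hσN), hcon⟩

end AuxProof

/-- Subcase 2-(b) of Lemma 4.4: if the minimal-index
homogeneous edge e_i with negative block difference is not convertible, then the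
set {j < i : e_j homogeneous, bdiff(e_j) = 0, e_j crosses e_i} is nonempty and its
maximum i' gives a convertible edge e_{i'}. -/
theorem max_crossing_zero_bdiff_convertible {k N : ℕ} (n : Fin k → ℕ)
    (hn : ∀ r, 0 < n r) (hN : N = ∑ r, n r)
    (σ : Equiv.Perm (Fin N)) (S : Finset (Fin N)) (hS : ValidMark n σ S)
    (i : Fin N) (hih : HomEdge n σ i) (hineg : bdiff σ S i < 0)
    (hmin : ∀ j, HomEdge n σ j → bdiff σ S j < 0 → i ≤ j)
    (hnc : ¬ Convertible σ S i) :
    ∃ i', (i' < i ∧ HomEdge n σ i' ∧ bdiff σ S i' = 0 ∧ CrossLeft σ i' i) ∧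
      (∀ j, j < i → HomEdge n σ j → bdiff σ S j = 0 → CrossLeft σ j i → j ≤ i') ∧
      Convertible σ S i' := by
  classical
  -- Step 1: i must be marked.
  have hiS : i ∈ S := by
    by_contra hiS
    apply hnc
    unfold Convertible
    rw [if_neg hiS]
    constructor
    · intro j hj
      by_contra hneg
      push_neg at hneg
      by_cases hjh : HomEdge n σ j
      · exact absurd (hmin j hjh hneg) (not_le.mpr hj.1)
      · have := F2 n σ S hS hih hj hjh
        linarith
    · intro j hj
      have hF := F1w σ S hj
      rw [if_neg hiS] at hF
      have c1 : (0:ℤ) ≤ (if j ∈ S then (1:ℤ) else 0) := by split <;> norm_num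
      have : bdiff σ S j < 0 := by linarith
      omega
  -- Step 2: extract an element of Z from non-convertibility.
  have hZ : ∃ j, j < i ∧ HomEdge n σ j ∧ bdiff σ S j = 0 ∧ CrossLeft σ j i := by
    unfold Convertible at hnc
    rw [if_pos hiS] at hnc
    rcases not_and_or.mp hnc with h | h
    · push_neg at h
      obtain ⟨j, hj, hbj⟩ := h
      have hjh : HomEdge n σ j := by
        by_contra hjn
        have := F2 n σ S hS hih hj hjn
        linarith
      have hb0 : bdiff σ S j = 0 := by
        have hnlt : ¬ bdiff σ S j < 0 := fun hlt => absurd (hmin j hjh hlt) (not_le.mpr hj.1)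
        omega
      exact ⟨j, hj.1, hjh, hb0, hj⟩
    · exfalso
      push_neg at h
      obtain ⟨j, hj, hbj⟩ := h
      have hF := F1w σ S hj
      rw [if_pos hiS] at hF
      have c1 : (0:ℤ) ≤ (if j ∈ S then (1:ℤ) else 0) := by split <;> norm_num
      linarith
  obtain ⟨j₀, hj₀1, hj₀2, hj₀3, hj₀4⟩ := hZ
  -- Step 3: the finset Z and its maximum.
  set Z : Finset (Fin N) := Finset.univ.filter
    (fun z => z < i ∧ HomEdge n σ z ∧ bdiff σ S z = 0 ∧ CrossLeft σ z i) with hZdef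
  have hZne : Z.Nonempty := ⟨j₀, by
    rw [hZdef, Finset.mem_filter]
    exact ⟨Finset.mem_univ _, hj₀1, hj₀2, hj₀3, hj₀4⟩⟩
  set i' := Z.max' hZne with hi'def
  have hi'mem : i' ∈ Z := Z.max'_mem hZne
  rw [hZdef] at hi'mem
  obtain ⟨-, hi'lt, hi'hom, hi'b, hi'cr⟩ := Finset.mem_filter.mp hi'mem
  have hmax : ∀ z, z < i → HomEdge n σ z → bdiff σ S z = 0 → CrossLeft σ z i → z ≤ i' := by
    intro z h1 h2 h3 h4
    exact Z.le_max' z (by rw [hZdef, Finset.mem_filter]; exact ⟨Finset.mem_univ _, h1, h2, h3, h4⟩)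
  refine ⟨i', ⟨hi'lt, hi'hom, hi'b, hi'cr⟩, hmax, ?_⟩
  -- Step 4: convertibility of i'.
  have hσii' : σ i < σ i' := hi'cr.2
  unfold Convertible
  by_cases hi'S : i' ∈ S
  · rw [if_pos hi'S]
    constructor
    · intro j hj
      have hF := F1w σ S hj
      rw [if_pos hi'S, hi'b] at hF
      have c1 : (0:ℤ) ≤ (if j ∈ S then (1:ℤ) else 0) := by split <;> norm_num
      linarith
    · intro j hj
      have hF := F1 σ S hj
      rw [if_pos hi'S, hi'b] at hF
      have c1 : (0:ℤ) ≤ ((S.filter fun t => i' < t ∧ t < j).card : ℤ) := Nat.cast_nonneg _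
      have c2 : (0:ℤ) ≤ ((S.filter fun t => σ j < σ t ∧ σ t < σ i').card : ℤ) := Nat.cast_nonneg _
      by_cases hjS : j ∈ S
      · rw [if_pos hjS] at hF
        linarith
      · rw [if_neg hjS] at hF
        have hjh : HomEdge n σ j := by
          by_contra hjn
          exact hjS (hS j hjn)
        rcases lt_trichotomy j i with hji | hji | hji
        · exfalso
          have hneg : bdiff σ S j < 0 := by linarith
          exact absurd (hmin j hjh hneg) (not_le.mpr hji)
        · exact absurd (hji ▸ hiS) hjS
        · have hcp : 0 < (S.filter fun t => i' < t ∧ t < j).card :=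
            Finset.card_pos.mpr ⟨i, Finset.mem_filter.mpr ⟨hiS, hi'lt, hji⟩⟩
          have : (1:ℤ) ≤ ((S.filter fun t => i' < t ∧ t < j).card : ℤ) := by
            exact_mod_cast hcp
          linarith
  · rw [if_neg hi'S]
    constructor
    · intro j hj
      have hF := F1w σ S hj
      rw [if_neg hi'S, hi'b] at hF
      have c1 : (0:ℤ) ≤ (if j ∈ S then (1:ℤ) else 0) := by split <;> norm_num
      linarith
    · intro j hj
      have hF := F1 σ S hj
      rw [if_neg hi'S, hi'b] at hF
      have c1 : (0:ℤ) ≤ ((S.filter fun t => i' < t ∧ t < j).card : ℤ) := Nat.cast_nonneg _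
      have c2 : (0:ℤ) ≤ ((S.filter fun t => σ j < σ t ∧ σ t < σ i').card : ℤ) := Nat.cast_nonneg _
      by_cases hjS : j ∈ S
      · rw [if_pos hjS] at hF
        linarith
      · rw [if_neg hjS] at hF
        have hjh : HomEdge n σ j := by
          by_contra hjn
          exact hjS (hS j hjn)
        by_contra hcon
        push_neg at hcon
        have hb0 : bdiff σ S j = 0 := by linarith
        have hcp0 : ((S.filter fun t => i' < t ∧ t < j).card : ℤ) = 0 := by linarith
        have hcv0 : ((S.filter fun t => σ j < σ t ∧ σ t < σ i').card : ℤ) = 0 := by linarith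
        rcases lt_trichotomy j i with hji | hji | hji
        · rcases lt_trichotomy (σ j) (σ i) with hs | hs | hs
          · have hcp : 0 < (S.filter fun t => σ j < σ t ∧ σ t < σ i').card :=
              Finset.card_pos.mpr ⟨i, Finset.mem_filter.mpr ⟨hiS, hs, hσii'⟩⟩
            have : (1:ℤ) ≤ ((S.filter fun t => σ j < σ t ∧ σ t < σ i').card : ℤ) := by
              exact_mod_cast hcp
            linarith
          · exact absurd (σ.injective hs) (ne_of_lt hji)
          · have hjZ : j ≤ i' := hmax j hji hjh hb0 ⟨hji, hs⟩
            exact absurd hj.1 (not_lt.mpr hjZ)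
        · exact hjS (hji ▸ hiS)
        · have hcp : 0 < (S.filter fun t => i' < t ∧ t < j).card :=
            Finset.card_pos.mpr ⟨i, Finset.mem_filter.mpr ⟨hiS, hi'lt, hji⟩⟩
          have : (1:ℤ) ≤ ((S.filter fun t => i' < t ∧ t < j).card : ℤ) := by
            exact_mod_cast hcp
          linarith
end
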